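/- Let Δ be a finite ranked signature and yield a projective yield function over Δ with terminal alphabet {a,b,c,d}. For every r ∈ ℕ there exists s ∈ ℕ such that every term t over Δ whose yield lies in a^* b^s c^s d^* has a subtree t' such that, for some pair (x,y) ∈ {(a,c),(c,a),(b,d),(d,b)}, yield(t') contains at least r occurrences of x and no occurrence of y. -/

import Mathlib

/-- Terms over a ranked signature `Δ` with arity function `ar`. -/
inductive PTerm (Δ : Type*) (ar : Δ → ℕ) : Type _
  | node (f : Δ) (ts : Fin (ar f) → PTerm Δ ar) : PTerm Δ ar

variable {Δ : Type*} {ar : Δ → ℕ} {σ : Type*}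

/-- Yield of a term, given a yield function on symbols: `yield (f(t_1,…,t_k))` is
`Y f` with each variable `x_i` replaced by the yield of `t_i`. -/
def PTerm.yield (Y : ∀ f : Δ, List (σ ⊕ Fin (ar f))) : PTerm Δ ar → List σ
  | .node f ts => (Y f).flatMap fun s => match s with
      | .inl a => [a]
      | .inr i => (ts i).yield Y

/-- Projectivity: in `Y f`, each variable occurs exactly once, and the variables
occur in the order `x_1, …, x_k` from left to right. -/
def Projective (Y : ∀ f : Δ, List (σ ⊕ Fin (ar f))) : Prop :=
  ∀ f : Δ, (Y f).filterMap Sum.getRight? = List.ofFn (fun i : Fin (ar f) => i)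

/-- One-hole contexts over `Δ`: either the hole, or a node whose `i`-th child is
again a context (the others being terms; the value `ts i` is irrelevant). -/
inductive Ctx (Δ : Type*) (ar : Δ → ℕ) : Type _
  | hole : Ctx Δ ar
  | node (f : Δ) (i : Fin (ar f)) (C : Ctx Δ ar) (ts : Fin (ar f) → PTerm Δ ar) : Ctx Δ ar

/-- `C.subst t` plugs the term `t` into the hole of the context `C`. -/
def Ctx.subst : Ctx Δ ar → PTerm Δ ar → PTerm Δ ar
  | .hole, t => t
  | .node f i C ts, t => .node f fun j => if j = i then C.subst t else ts j

/-- Yield of a context, with `none` marking the hole. -/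
def Ctx.cyield (Y : ∀ f : Δ, List (σ ⊕ Fin (ar f))) : Ctx Δ ar → List (Option σ)
  | .hole => [none]
  | .node f i C ts => (Y f).flatMap fun s => match s with
      | .inl a => [some a]
      | .inr j => if j = i then C.cyield Y else ((ts j).yield Y).map some

/-- The part of the yield of a context to the left of the hole. -/
def Ctx.leftc (Y : ∀ f : Δ, List (σ ⊕ Fin (ar f))) (C : Ctx Δ ar) : List σ :=
  ((C.cyield Y).takeWhile fun o => o.isSome).reduceOption

/-- The part of the yield of a context to the right of the hole. -/
def Ctx.rightc (Y : ∀ f : Δ, List (σ ⊕ Fin (ar f))) (C : Ctx Δ ar) : List σ :=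
  (((C.cyield Y).dropWhile fun o => o.isSome).tail).reduceOption

/-- `yield(C) = leftc(C) · rightc(C)`. -/
def Ctx.yieldc (Y : ∀ f : Δ, List (σ ⊕ Fin (ar f))) (C : Ctx Δ ar) : List σ :=
  C.leftc Y ++ C.rightc Y

/-- Height of a term: 1 plus the maximum height of the children. -/
def PTerm.height : PTerm Δ ar → ℕ
  | .node _ ts => 1 + Finset.univ.sup fun i => (ts i).height

/-- Height of a context, viewed as a term (the hole is a nullary node). -/
def Ctx.height : Ctx Δ ar → ℕ
  | .hole => 1
  | .node _ i C ts =>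
      1 + max C.height (Finset.univ.sup fun j => if j = i then 0 else (ts j).height)

/-- `Subtree s t`: `s` is a subtree of `t` (a term rooted at a node of `t`). -/
inductive Subtree : PTerm Δ ar → PTerm Δ ar → Prop
  | refl (t : PTerm Δ ar) : Subtree t t
  | child {s : PTerm Δ ar} (f : Δ) (ts : Fin (ar f) → PTerm Δ ar) (i : Fin (ar f)) :
      Subtree s (ts i) → Subtree s (.node f ts)

/-- `StrictSubtree s t`: `s` is a subtree of a child of `t`. -/
def StrictSubtree (s t : PTerm Δ ar) : Prop :=
  ∃ (f : Δ) (ts : Fin (ar f) → PTerm Δ ar) (i : Fin (ar f)),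
    t = PTerm.node f ts ∧ Subtree s (ts i)

/-- `t.Pos p`: the list of child indices `p` is (the address of) a node of `t`. -/
inductive PTerm.Pos : PTerm Δ ar → List ℕ → Prop
  | nil (t : PTerm Δ ar) : Pos t []
  | cons (f : Δ) (ts : Fin (ar f) → PTerm Δ ar) (i : Fin (ar f)) {p : List ℕ} :
      Pos (ts i) p → Pos (.node f ts) (i.val :: p)

/-- The address of the hole of a context. -/
def Ctx.holePath : Ctx Δ ar → List ℕ
  | .hole => []
  | .node _ i C _ => i.val :: C.holePath

/-- Sum, over the nodes of a term, of a weight attached to the node labels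
(e.g. the number of `z`-labelled edges contributed by each node). -/
def PTerm.esum (w : Δ → ℕ) : PTerm Δ ar → ℕ
  | .node f ts => w f + Finset.univ.sum fun i => (ts i).esum w

/-- `(D_x, D_0, t_y)` is an `x,y,l`-separation of `t`. -/
def IsSep [DecidableEq σ] (Y : ∀ f : Δ, List (σ ⊕ Fin (ar f))) (x y : σ) (l : ℕ)
    (t : PTerm Δ ar) (Dx D0 : Ctx Δ ar) (ty : PTerm Δ ar) : Prop :=
  t = Dx.subst (D0.subst ty) ∧ (Dx.yieldc Y).count y = 0 ∧
    (D0.yieldc Y).count x ≤ l ∧ (ty.yield Y).count x = 0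

/-- `t` is `x,y,l`-separated. -/
def Separated [DecidableEq σ] (Y : ∀ f : Δ, List (σ ⊕ Fin (ar f))) (x y : σ) (l : ℕ)
    (t : PTerm Δ ar) : Prop :=
  ∃ Dx D0 ty, IsSep Y x y l t Dx D0 ty

/-- The four-letter alphabet `{a, b, c, d}`. -/
inductive ABCD | a | b | c | d
deriving DecidableEq

/-!
Follow the letters `b` down the tree. The yield of every subtree is an infix of
`a^* b^s c^s d^*`, so a subtree containing `b` and `d` contains all `s` letters `c`, and one
containing `a` and `c` contains all `s` letters `b`. Hence, unless the current subtree already has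
`r` letters `b` and no `d`, or `r` letters `c` and no `a`, it carries all `s` letters `b`. A node
emits at most `M = max |Y f|` letters itself, so if every child had fewer than `r` letters `b`
there would be at most `M + K r` of them (`K` the maximal arity); for larger `s` some child has
`r` letters `b`, and the descent continues.
-/

open List

theorem List.IsInfix.count_eq_of_pairwise {α : Type*} [DecidableEq α] {R : α → α → Prop}
    {u w : List α} (hu : u <:+: w) (hw : w.Pairwise R) {x y z : α} (hx : x ∈ u) (hy : y ∈ u) (hzx : ¬R z x) (hyz : ¬R y z) :
    u.count z = w.count z := by
  obtain ⟨p, q, rfl⟩ := hu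
  simp only [pairwise_append, mem_append] at hw
  have hzp : z ∉ p := fun hz => hzx (hw.1.2.2 z hz x hx)
  have hzq : z ∉ q := fun hz => hyz (hw.2.2 y (Or.inr hy) z hz)
  simp [count_eq_zero.mpr hzp, count_eq_zero.mpr hzq]

theorem List.count_flatMap_le_length_add {α β : Type*} [DecidableEq α] {g : α ⊕ β → List α}
    (hg : ∀ a, g (.inl a) = [a]) (l : List (α ⊕ β)) (z : α) :
    (l.flatMap g).count z ≤
      l.length + ((l.filterMap Sum.getRight?).map fun b => (g (.inr b)).count z).sum := by
  induction l with
  | nil => simp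
  | cons s l ih =>
    cases s with
    | inl a =>
      simp only [flatMap_cons, count_append, hg, filterMap_cons, Sum.getRight?_inl, length_cons]
      have : [a].count z ≤ 1 := count_le_length
      omega
    | inr b =>
      simp only [flatMap_cons, count_append, filterMap_cons, Sum.getRight?_inr, map_cons, sum_cons,
        length_cons]
      omega

namespace ABCD

def rank : ABCD → ℕ
  | a => 0
  | b => 1
  | c => 2
  | d => 3

def word (na s nd : ℕ) : List ABCD :=
  replicate na a ++ replicate s b ++ replicate s c ++ replicate nd d

theorem word_pairwise (na s nd : ℕ) : (word na s nd).Pairwise (fun u v => u.rank ≤ v.rank) := by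
  simp only [word, pairwise_append, pairwise_replicate, mem_append, mem_replicate]
  refine ⟨⟨⟨Or.inr le_rfl, Or.inr le_rfl, ?_⟩, Or.inr le_rfl, ?_⟩, Or.inr le_rfl, ?_⟩
  · rintro x ⟨-, rfl⟩ y ⟨-, rfl⟩; decide
  · rintro x (⟨-, rfl⟩ | ⟨-, rfl⟩) y ⟨-, rfl⟩ <;> decide
  · rintro x ((⟨-, rfl⟩ | ⟨-, rfl⟩) | ⟨-, rfl⟩) y ⟨-, rfl⟩ <;> decide

@[simp] theorem count_b_word (na s nd : ℕ) : (word na s nd).count b = s := by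
  simp [word, count_replicate]

@[simp] theorem count_c_word (na s nd : ℕ) : (word na s nd).count c = s := by
  simp [word, count_replicate]

theorem count_eq_of_infix_word {u : List ABCD} {na s nd : ℕ} (hu : u <:+: word na s nd)
    {x y z : ABCD} (hx : x ∈ u) (hy : y ∈ u) (hxz : x.rank < z.rank) (hzy : z.rank < y.rank) :
    u.count z = (word na s nd).count z :=
  hu.count_eq_of_pairwise (word_pairwise na s nd) hx hy (by omega) (by omega)

end ABCD

namespace PTerm

variable {Y : ∀ f : Δ, List (σ ⊕ Fin (ar f))}

theorem inr_mem_of_projective (hY : Projective Y) (f : Δ) (i : Fin (ar f)) :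
    Sum.inr i ∈ Y f := by
  have hi : i ∈ (Y f).filterMap Sum.getRight? := by
    rw [hY f]
    exact mem_ofFn.mpr ⟨i, rfl⟩
  obtain ⟨s, hs, hsi⟩ := mem_filterMap.mp hi
  rwa [Sum.getRight?_eq_some_iff.mp hsi] at hs

theorem yield_child_infix (hY : Projective Y) (f : Δ) (ts : Fin (ar f) → PTerm Δ ar)
    (i : Fin (ar f)) : (ts i).yield Y <:+: (node f ts).yield Y := by
  obtain ⟨l₁, l₂, hl⟩ := append_of_mem (inr_mem_of_projective hY f i)
  rw [yield, hl, flatMap_append, flatMap_cons, ← append_assoc]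
  exact infix_append _ _ _

theorem count_yield_node_le [DecidableEq σ] (hY : Projective Y) (f : Δ)
    (ts : Fin (ar f) → PTerm Δ ar) (z : σ) :
    ((node f ts).yield Y).count z ≤ (Y f).length + ∑ i, ((ts i).yield Y).count z := by
  rw [yield]
  refine le_of_le_of_eq (count_flatMap_le_length_add ?_ (Y f) z) ?_
  · intro; rfl
  · rw [hY f, map_ofFn, sum_ofFn]
    rfl

theorem count_yield_node_le_of_forall_lt [Fintype Δ] [DecidableEq σ] (hY : Projective Y)
    {f : Δ} {ts : Fin (ar f) → PTerm Δ ar} {z : σ} {r : ℕ}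
    (h : ∀ i, ((ts i).yield Y).count z < r) :
    ((node f ts).yield Y).count z ≤
      (Finset.univ.sup fun f => (Y f).length) + Finset.univ.sup ar * r :=
  calc ((node f ts).yield Y).count z
      ≤ (Y f).length + ∑ i, ((ts i).yield Y).count z := count_yield_node_le hY f ts z
    _ ≤ (Finset.univ.sup fun f => (Y f).length) + ∑ _i : Fin (ar f), r := by
      gcongr with i
      · exact Finset.le_sup (f := fun f => (Y f).length) (Finset.mem_univ f)
      · exact (h i).le
    _ ≤ (Finset.univ.sup fun f => (Y f).length) + Finset.univ.sup ar * r := by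
      simp only [Finset.sum_const, Finset.card_univ, Fintype.card_fin, smul_eq_mul]
      gcongr
      exact Finset.le_sup (Finset.mem_univ f)

end PTerm

def HasOneSidedSubtree (Y : ∀ f : Δ, List (ABCD ⊕ Fin (ar f))) (r : ℕ) (t : PTerm Δ ar) : Prop :=
  ∃ t' : PTerm Δ ar, Subtree t' t ∧ ∃ x y : ABCD,
    (x, y) ∈ ([(ABCD.a, ABCD.c), (ABCD.c, ABCD.a),
               (ABCD.b, ABCD.d), (ABCD.d, ABCD.b)] : List (ABCD × ABCD)) ∧
    r ≤ (t'.yield Y).count x ∧ (t'.yield Y).count y = 0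

theorem hasOneSidedSubtree_of_infix_word [Fintype Δ] {Y : ∀ f : Δ, List (ABCD ⊕ Fin (ar f))}
    (hY : Projective Y) {r na s nd : ℕ} (hr : 0 < r)
    (hs : (Finset.univ.sup fun f => (Y f).length) + Finset.univ.sup ar * r < s) :
    ∀ t : PTerm Δ ar, t.yield Y <:+: ABCD.word na s nd → r ≤ (t.yield Y).count .b →
      HasOneSidedSubtree Y r t := by
  intro t
  induction t with
  | node f ts ih =>
    intro hin hb
    set w := (PTerm.node f ts).yield Y
    have hrs : r ≤ s := hb.trans (ABCD.count_b_word na s nd ▸ hin.sublist.count_le .b)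
    by_cases hd : w.count .d = 0
    · exact ⟨_, .refl _, .b, .d, by decide, hb, hd⟩
    have hbm : ABCD.b ∈ w := count_pos_iff.mp (by omega)
    have hdm : ABCD.d ∈ w := count_pos_iff.mp (by omega)
    have hc : w.count .c = s := by
      rw [ABCD.count_eq_of_infix_word hin hbm hdm (by decide) (by decide), ABCD.count_c_word]
    by_cases ha : w.count .a = 0
    · exact ⟨_, .refl _, .c, .a, by decide, show r ≤ w.count .c by omega, ha⟩
    have ham : ABCD.a ∈ w := count_pos_iff.mp (by omega)
    have hcm : ABCD.c ∈ w := count_pos_iff.mp (by omega)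
    have hbs : w.count .b = s := by
      rw [ABCD.count_eq_of_infix_word hin ham hcm (by decide) (by decide), ABCD.count_b_word]
    by_cases hchild : ∃ i, r ≤ ((ts i).yield Y).count .b
    · obtain ⟨i, hi⟩ := hchild
      obtain ⟨t', ht', hxy⟩ := ih i ((PTerm.yield_child_infix hY f ts i).trans hin) hi
      exact ⟨t', .child f ts i ht', hxy⟩
    · push Not at hchild
      have : w.count .b ≤ _ := PTerm.count_yield_node_le_of_forall_lt hY hchild
      omega

/-- For every `r` there is `s` such that every term whose yield lies in
`a^* b^s c^s d^*` has a subtree whose yield has at least `r` occurrences of `x` and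
none of `y`, for some pair `(x,y) ∈ {(a,c),(c,a),(b,d),(d,b)}`. -/
theorem statement0 {Δ : Type*} [Fintype Δ] {ar : Δ → ℕ}
    (Y : ∀ f : Δ, List (ABCD ⊕ Fin (ar f))) (hY : Projective Y) (r : ℕ) :
    ∃ s : ℕ, ∀ t : PTerm Δ ar,
      (∃ na nd : ℕ, t.yield Y =
          List.replicate na ABCD.a ++ List.replicate s ABCD.b ++
          List.replicate s ABCD.c ++ List.replicate nd ABCD.d) →
      ∃ t' : PTerm Δ ar, Subtree t' t ∧
        ∃ x y : ABCD,
          (x, y) ∈ ([(ABCD.a, ABCD.c), (ABCD.c, ABCD.a),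
                     (ABCD.b, ABCD.d), (ABCD.d, ABCD.b)] : List (ABCD × ABCD)) ∧
          r ≤ (t'.yield Y).count x ∧ (t'.yield Y).count y = 0 := by
  set s := (Finset.univ.sup fun f => (Y f).length) + Finset.univ.sup ar * (r + 1) + (r + 1)
  refine ⟨s, fun t ⟨na, nd, ht⟩ => ?_⟩
  have hword : t.yield Y = ABCD.word na s nd := ht
  obtain ⟨t', ht', x, y, hxy, hx, hy⟩ :=
    hasOneSidedSubtree_of_infix_word hY (r := r + 1) (s := s) r.succ_pos (by omega) t
      (by rw [hword]) (by rw [hword, ABCD.count_b_word]; omega)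
  exact ⟨t', ht', x, y, hxy, by omega, hy⟩
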